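/- arXiv:2505.10386 — 2 statements merged into one kernel-verified Lean document; each statement's English description precedes it below -/
import Mathlib

section
/- Let G be a finite group and L a G-lattice. Then L admits a coflasque resolution of the second type: there exists a short exact sequence of G-lattices 0 → L → C → P → 0 in which C is a coflasque G-lattice and P is a permutation G-lattice. -/
/-!
Every `H`-cocycle of `L` is killed by enlarging `L`. For a subgroup `H` and an `H`-cocycle `f`,
inducing the class of `f` from `H` to `G` gives an extension `0 → L → E → ℤ[G/H] → 0` in which
the basis vector of the trivial coset lifts to an element whose `H`-coboundary is `f`. Since
`Z¹(H, L)` is finitely generated, doing this at once for finitely many generators over all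
subgroups gives `0 → L → C → ℤ[X] → 0` such that `H¹(H, L) → H¹(H, C)` vanishes for every `H`.
As `H¹(H, ℤ[X]) = 0` (the finite stabilisers admit no nonzero homomorphism to `ℤ`), the long
exact cohomology sequence gives `H¹(H, C) = 0`.
-/

section Defs

variable (G : Type) [Group G] (L : Type) [AddCommGroup L] [DistribMulAction G L]

/-- `L` is a permutation `G`-lattice: it has a `ℤ`-basis indexed by a finite
`G`-set that is permuted by the action of `G`. -/
def IsPermutationLattice : Prop :=
  ∃ (X : Type) (_ : Fintype X) (σ : G →* Equiv.Perm X) (b : Module.Basis X ℤ L),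
    ∀ (g : G) (x : X), g • (b x) = b (σ g x)

/-- `L` is coflasque: `H¹(H, L) = 0` for every subgroup `H ≤ G`, expressed via
inhomogeneous 1-cocycles and 1-coboundaries. -/
def IsCoflasqueLattice : Prop :=
  ∀ H : Subgroup G, ∀ f : G → L,
    (∀ g ∈ H, ∀ h ∈ H, f (g * h) = f g + g • f h) →
    ∃ x : L, ∀ g ∈ H, f g = g • x - x

/-- An exact sequence `0 → A → B → C → 0` of `G`-modules: `f` and `p` are
`ℤ`-linear, `G`-equivariant, `f` is injective, `p` is surjective, and
`ker p = range f`. -/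
def IsEquivariantSES {A B C : Type} [AddCommGroup A] [AddCommGroup B] [AddCommGroup C]
    [DistribMulAction G A] [DistribMulAction G B] [DistribMulAction G C]
    (f : A →ₗ[ℤ] B) (p : B →ₗ[ℤ] C) : Prop :=
  (∀ (γ : G) (a : A), f (γ • a) = γ • f a) ∧
  (∀ (γ : G) (b : B), p (γ • b) = γ • p b) ∧
  Function.Injective f ∧ Function.Surjective p ∧
  LinearMap.ker p = LinearMap.range f

end Defs

section Cochains

variable {G : Type*} [Group G] (M : Type*) [AddCommGroup M] [DistribMulAction G M]

def cocyclesOn (H : Subgroup G) : Submodule ℤ (G → M) where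
  carrier := {f | ∀ g ∈ H, ∀ h ∈ H, f (g * h) = f g + g • f h}
  add_mem' {f f'} hf hf' g hg h hh := by
    simp only [Pi.add_apply, hf g hg h hh, hf' g hg h hh, smul_add]
    abel
  zero_mem' _ _ _ _ := by simp
  smul_mem' n f hf g hg h hh := by
    simp only [Pi.smul_apply, hf g hg h hh, smul_add, smul_comm g n]

def coboundariesOn (H : Subgroup G) : Submodule ℤ (G → M) where
  carrier := {f | ∃ x : M, ∀ g ∈ H, f g = g • x - x}
  add_mem' {f f'} := by
    rintro ⟨x, hx⟩ ⟨x', hx'⟩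
    exact ⟨x + x', fun g hg => by simp only [Pi.add_apply, hx g hg, hx' g hg, smul_add]; abel⟩
  zero_mem' := ⟨0, by simp⟩
  smul_mem' n f := by
    rintro ⟨x, hx⟩
    exact ⟨n • x, fun g hg => by simp only [Pi.smul_apply, hx g hg, smul_sub, smul_comm g n]⟩

theorem cocyclesOn_fg [Finite G] [Module.Finite ℤ M] (H : Subgroup G) : (cocyclesOn M H).FG :=
  IsNoetherian.noetherian _

variable {M}

theorem apply_one_eq_zero_of_mem_cocyclesOn {H : Subgroup G} {f : G → M}
    (hf : f ∈ cocyclesOn M H) : f 1 = 0 := by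
  simpa using hf 1 H.one_mem 1 H.one_mem

end Cochains

theorem isCoflasqueLattice_iff {G M : Type} [Group G] [AddCommGroup M] [DistribMulAction G M] :
    IsCoflasqueLattice G M ↔ ∀ H : Subgroup G, cocyclesOn M H ≤ coboundariesOn M H :=
  Iff.rfl

theorem IsEquivariantSES.cocyclesOn_le_coboundariesOn {G : Type} [Group G] {A B C : Type}
    [AddCommGroup A] [AddCommGroup B] [AddCommGroup C]
    [DistribMulAction G A] [DistribMulAction G B] [DistribMulAction G C]
    {f : A →ₗ[ℤ] B} {p : B →ₗ[ℤ] C} (hfp : IsEquivariantSES G f p) {H : Subgroup G}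
    (hA : cocyclesOn A H ≤ (coboundariesOn B H).comap (f.compLeft G))
    (hC : cocyclesOn C H ≤ coboundariesOn C H) :
    cocyclesOn B H ≤ coboundariesOn B H := by
  obtain ⟨hf, hp, hf_inj, hp_surj, hexact⟩ := hfp
  intro F hF
  obtain ⟨z, hz⟩ := hC (x := p.compLeft G F) fun g hg h hh => by
    simp [hF g hg h hh, hp]
  obtain ⟨y, rfl⟩ := hp_surj z
  set F' : G → B := fun g => F g - (g • y - y)
  have hF'_range : ∀ g ∈ H, F' g ∈ LinearMap.range f := fun g hg => by
    rw [← hexact, LinearMap.mem_ker]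
    simpa [F', hp, sub_eq_zero] using hz g hg
  set a : G → A := fun g => Function.invFun f (F' g)
  have ha : ∀ g ∈ H, f (a g) = F' g := fun g hg => Function.invFun_eq (hF'_range g hg)
  have ha_cocycle : a ∈ cocyclesOn A H := fun g hg h hh => hf_inj <| by
    rw [map_add, hf, ha _ (mul_mem hg hh), ha g hg, ha h hh]
    simp only [F', hF g hg h hh, mul_smul, smul_sub]
    abel
  obtain ⟨x, hx⟩ := hA ha_cocycle
  refine ⟨y + x, fun g hg => ?_⟩
  have hxg : F g - (g • y - y) = g • x - x := by simpa [ha g hg] using hx g hg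
  rw [sub_eq_iff_eq_add.mp hxg, smul_add]
  abel

/- `G` acts on `ℤ[X] = X →₀ ℤ` by permuting the basis: `(g • v) x = v (g⁻¹ • x)`. -/
attribute [local instance] Finsupp.comapSMul Finsupp.comapMulAction Finsupp.comapDistribMulAction

theorem isPermutationLattice_finsupp {G X : Type} [Group G] [MulAction G X] [Finite X] :
    IsPermutationLattice G (X →₀ ℤ) :=
  ⟨X, Fintype.ofFinite X, MulAction.toPermHom G X, Finsupp.basisSingleOne, fun g x => by simp⟩

section PermutationLattice

variable {G X : Type*} [Group G] [MulAction G X] {H : Subgroup G} {w : G → X →₀ ℤ}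

theorem cocycle_mul_apply (hw : w ∈ cocyclesOn (X →₀ ℤ) H) {g h : G} (hg : g ∈ H) (hh : h ∈ H)
    (y : X) : w (g * h) y = w g y + w h (g⁻¹ • y) := by
  rw [hw g hg h hh, Finsupp.add_apply, Finsupp.comapSMul_apply]

/-- On the stabiliser of `y`, `σ ↦ w σ y` is a homomorphism from a finite group to `ℤ`. -/
theorem cocycle_apply_eq_zero_of_smul_eq [Finite G] (hw : w ∈ cocyclesOn (X →₀ ℤ) H) {σ : G}
    (hσ : σ ∈ H) {y : X} (hy : σ • y = y) : w σ y = 0 := by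
  have hσy : σ ∈ MulAction.stabilizer G y := hy
  have hpow : ∀ n : ℕ, w (σ ^ n) y = n • w σ y := by
    intro n
    induction n with
    | zero => simp [apply_one_eq_zero_of_mem_cocyclesOn hw]
    | succ n ih =>
      have hinv : (σ ^ n)⁻¹ • y = y := inv_mem (pow_mem hσy n)
      rw [pow_succ, cocycle_mul_apply hw (pow_mem hσ n) hσ, hinv, ih, succ_nsmul]
  have h := hpow (orderOf σ)
  rw [pow_orderOf_eq_one, apply_one_eq_zero_of_mem_cocyclesOn hw, Finsupp.zero_apply, eq_comm,
    smul_eq_zero] at h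
  exact h.resolve_left (orderOf_pos σ).ne'

/-- With `τ x ∈ H` carrying the representative `ρ x` of the `H`-orbit of `x` to `x`, the cocycle
is the coboundary of `x ↦ -w (τ x) x`; comparing two choices of `τ` costs a value of `w` on a
stabiliser, which vanishes. -/
theorem cocyclesOn_finsupp_le_coboundariesOn [Finite G] [Finite X] (H : Subgroup G) :
    cocyclesOn (X →₀ ℤ) H ≤ coboundariesOn (X →₀ ℤ) H := by
  intro w hw
  let ρ : X → X := fun x => (Quotient.mk (MulAction.orbitRel H X) x).out
  have hρ_inv_smul : ∀ g ∈ H, ∀ x, ρ (g⁻¹ • x) = ρ x := fun g hg x =>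
    congrArg Quotient.out (Quotient.sound ⟨⟨g, hg⟩⁻¹, rfl⟩)
  have hρ : ∀ x, ∃ t : H, t • ρ x = x := fun x => by
    obtain ⟨t, ht⟩ := Quotient.mk_out (s := MulAction.orbitRel H X) x
    exact ⟨t⁻¹, by rw [show ρ x = t • x from ht.symm, inv_smul_smul]⟩
  choose τ hτ using hρ
  refine ⟨Finsupp.equivFunOnFinite.symm fun x => -w (τ x) x, fun g hg => Finsupp.ext fun x => ?_⟩
  set t : G := ↑(τ x)
  set t' : G := ↑(τ (g⁻¹ • x))
  have hs : t⁻¹ * g * t' ∈ H := mul_mem (mul_mem (inv_mem (τ x).2) hg) (τ _).2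
  have ht : t⁻¹ • x = ρ x := by rw [inv_smul_eq_iff]; exact (hτ x).symm
  have ht' : t' • ρ x = g⁻¹ • x := by rw [← hρ_inv_smul g hg x]; exact hτ _
  have hs_fix : (t⁻¹ * g * t') • ρ x = ρ x := by
    rw [mul_smul, ht', ← mul_smul, mul_inv_cancel_right, ht]
  have h_gt' := cocycle_mul_apply hw hg (τ (g⁻¹ • x)).2 x
  have h_ts := cocycle_mul_apply hw (τ x).2 hs x
  rw [show t * (t⁻¹ * g * t') = g * t' by group, ht,
    cocycle_apply_eq_zero_of_smul_eq hw hs hs_fix] at h_ts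
  have h_split := h_gt'.symm.trans h_ts
  simp only [Finsupp.coe_sub, Pi.sub_apply, Finsupp.comapSMul_apply,
    Finsupp.coe_equivFunOnFinite_symm]
  omega

end PermutationLattice

/-- A 1-cocycle of `G` with values in `Hom(ℤ[X], L)`, recorded by its values `toFun g x` on the
basis vectors; `Extension` is the extension `0 → L → E → ℤ[X] → 0` that it classifies. -/
structure TwistingCocycle (G X L : Type*) [Group G] [MulAction G X] [AddCommGroup L]
    [DistribMulAction G L] where
  toFun : G → X → L
  map_mul : ∀ g g' x, toFun (g * g') x = toFun g (g' • x) + g • toFun g' x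

namespace TwistingCocycle

section Extension

variable {G X L : Type*} [Group G] [MulAction G X] [AddCommGroup L] [DistribMulAction G L]
  (φ : TwistingCocycle G X L)

theorem map_one (x : X) : φ.toFun 1 x = 0 := by
  simpa using φ.map_mul 1 1 x

theorem linearCombination_mul (g g' : G) (v : X →₀ ℤ) :
    Finsupp.linearCombination ℤ (φ.toFun (g * g')) v =
      Finsupp.linearCombination ℤ (φ.toFun g) (g' • v) +
        g • Finsupp.linearCombination ℤ (φ.toFun g') v := by
  induction v using Finsupp.induction_linear with
  | zero => simp
  | add v w hv hw => simp only [map_add, smul_add, hv, hw]; abel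
  | single x n => simp [φ.map_mul, smul_comm g n]

def Extension (_ : TwistingCocycle G X L) : Type _ := L × (X →₀ ℤ)

noncomputable section

instance : AddCommGroup φ.Extension := inferInstanceAs (AddCommGroup (L × (X →₀ ℤ)))

instance [Module.Free ℤ L] : Module.Free ℤ φ.Extension :=
  inferInstanceAs (Module.Free ℤ (L × (X →₀ ℤ)))

instance [Module.Finite ℤ L] [Finite X] : Module.Finite ℤ φ.Extension :=
  inferInstanceAs (Module.Finite ℤ (L × (X →₀ ℤ)))

def twistedSMul (g : G) (c : L × (X →₀ ℤ)) : L × (X →₀ ℤ) :=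
  (g • c.1 + Finsupp.linearCombination ℤ (φ.toFun g) c.2, g • c.2)

theorem twistedSMul_one (c : L × (X →₀ ℤ)) : φ.twistedSMul 1 c = c :=
  have hφ : φ.toFun 1 = 0 := funext φ.map_one
  Prod.ext (by simp [twistedSMul, hφ]) (one_smul G c.2)

theorem twistedSMul_mul (g g' : G) (c : L × (X →₀ ℤ)) :
    φ.twistedSMul (g * g') c = φ.twistedSMul g (φ.twistedSMul g' c) :=
  Prod.ext (by simp only [twistedSMul, mul_smul, smul_add, linearCombination_mul]; abel)
    (mul_smul g g' c.2)

theorem twistedSMul_zero (g : G) : φ.twistedSMul g 0 = 0 :=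
  Prod.ext (by simp [twistedSMul]) (smul_zero g)

theorem twistedSMul_add (g : G) (c c' : L × (X →₀ ℤ)) :
    φ.twistedSMul g (c + c') = φ.twistedSMul g c + φ.twistedSMul g c' :=
  Prod.ext (by simp only [twistedSMul, Prod.fst_add, Prod.snd_add, smul_add, map_add]; abel)
    (smul_add g c.2 c'.2)

theorem twistedSMul_inl (g : G) (l : L) : φ.twistedSMul g (l, 0) = (g • l, 0) :=
  Prod.ext (by simp [twistedSMul]) (smul_zero g)

instance : DistribMulAction G φ.Extension where
  smul := φ.twistedSMul
  one_smul := φ.twistedSMul_one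
  mul_smul := φ.twistedSMul_mul
  smul_zero := φ.twistedSMul_zero
  smul_add := φ.twistedSMul_add

def inl : L →ₗ[ℤ] φ.Extension := LinearMap.inl ℤ L (X →₀ ℤ)

def snd : φ.Extension →ₗ[ℤ] X →₀ ℤ := LinearMap.snd ℤ L (X →₀ ℤ)

def single (x : X) : φ.Extension := (0, Finsupp.single x 1)

theorem smul_single_sub_single {g : G} {x : X} (hx : g • x = x) :
    g • φ.single x - φ.single x = φ.inl (φ.toFun g x) := by
  change φ.twistedSMul g (0, Finsupp.single x 1) - ((0, Finsupp.single x 1) : L × (X →₀ ℤ)) =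
    ((φ.toFun g x, 0) : L × (X →₀ ℤ))
  simp [twistedSMul, hx]

end

theorem compLeft_inl_mem_coboundariesOn {H : Subgroup G} {f : G → L} {x : X}
    (hx : ∀ g ∈ H, g • x = x) (hf : ∀ g ∈ H, φ.toFun g x = f g) :
    φ.inl.compLeft G f ∈ coboundariesOn φ.Extension H :=
  ⟨φ.single x, fun g hg => by
    rw [φ.smul_single_sub_single (hx g hg), hf g hg, LinearMap.compLeft_apply,
      Function.comp_apply]⟩

def sigma {ι : Type*} {X : ι → Type*} [∀ i, MulAction G (X i)]
    (φ : ∀ i, TwistingCocycle G (X i) L) : TwistingCocycle G (Σ i, X i) L where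
  toFun g x := (φ x.1).toFun g x.2
  map_mul g g' x := (φ x.1).map_mul g g' x.2

end Extension

theorem isEquivariantSES {G X L : Type} [Group G] [MulAction G X] [AddCommGroup L]
    [DistribMulAction G L] (φ : TwistingCocycle G X L) : IsEquivariantSES G φ.inl φ.snd :=
  ⟨fun g l => (φ.twistedSMul_inl g l).symm, fun _ _ => rfl, LinearMap.inl_injective,
    fun v => ⟨(0, v), rfl⟩, LinearMap.ker_snd _ _ _⟩

end TwistingCocycle

section CosetCocycle

variable {G L : Type*} [Group G] [AddCommGroup L] [DistribMulAction G L] (H : Subgroup G)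

open Classical in
/-- Normalised to represent the trivial coset by `1`, so that `cosetCocycle_apply_one` holds. -/
noncomputable def cosetRep (q : G ⧸ H) : G := if q = ↑(1 : G) then 1 else q.out

theorem mk_cosetRep (q : G ⧸ H) : ((cosetRep H q : G) : G ⧸ H) = q := by
  unfold cosetRep
  split_ifs with h
  · exact h.symm
  · exact QuotientGroup.out_eq' q

theorem cosetRep_one : cosetRep H (↑(1 : G) : G ⧸ H) = 1 := if_pos rfl

theorem cosetRep_inv_mul_mem (g : G) (q : G ⧸ H) :
    (cosetRep H (g • q))⁻¹ * g * cosetRep H q ∈ H := by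
  rw [mul_assoc, ← QuotientGroup.eq, ← smul_eq_mul, ← MulAction.Quotient.smul_mk, mk_cosetRep,
    mk_cosetRep]

theorem smul_coe_one_of_mem {g : G} (hg : g ∈ H) : g • (↑(1 : G) : G ⧸ H) = ↑(1 : G) := by
  rwa [← MulAction.mem_stabilizer_iff, MulAction.stabilizer_quotient]

/-- The cocycle of `G` in `Hom(ℤ[G/H], L)` induced from the `H`-cocycle `f` (Shapiro's lemma). -/
noncomputable def cosetCocycle {f : G → L} (hf : f ∈ cocyclesOn L H) :
    TwistingCocycle G (G ⧸ H) L where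
  toFun g q := cosetRep H (g • q) • f ((cosetRep H (g • q))⁻¹ * g * cosetRep H q)
  map_mul g g' q := by
    have hab := cosetRep_inv_mul_mem H g (g' • q)
    have hbc := cosetRep_inv_mul_mem H g' q
    rw [mul_smul g g' q]
    set a := cosetRep H (g • g' • q)
    set b := cosetRep H (g' • q)
    set c := cosetRep H q
    rw [show a⁻¹ * (g * g') * c = (a⁻¹ * g * b) * (b⁻¹ * g' * c) by group, hf _ hab _ hbc,
      smul_add, ← mul_smul, ← mul_smul, show a * (a⁻¹ * g * b) = g * b by group]

theorem cosetCocycle_apply_one {f : G → L} (hf : f ∈ cocyclesOn L H) {g : G} (hg : g ∈ H) :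
    (cosetCocycle H hf).toFun g ↑(1 : G) = f g := by
  simp [cosetCocycle, smul_coe_one_of_mem H hg, cosetRep_one]

end CosetCocycle

/-- **Existence of coflasque resolutions of the second type.**
If `G` is a finite group and `L` is a `G`-lattice, then there is a short exact
sequence of `G`-lattices `0 → L → C → P → 0` with `C` a coflasque `G`-lattice
and `P` a permutation `G`-lattice. -/
theorem coflasque_resolution_second_type
    (G : Type) [Group G] [Finite G]
    (L : Type) [AddCommGroup L] [DistribMulAction G L]
    (hLfree : Module.Free ℤ L) (hLfin : Module.Finite ℤ L) :
    ∃ (C P : Type) (_ : AddCommGroup C) (_ : AddCommGroup P)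
      (_ : DistribMulAction G C) (_ : DistribMulAction G P),
      Module.Free ℤ C ∧ Module.Finite ℤ C ∧
      IsCoflasqueLattice G C ∧ IsPermutationLattice G P ∧
      ∃ (f : L →ₗ[ℤ] C) (p : C →ₗ[ℤ] P), IsEquivariantSES G f p := by
  have := hLfree
  have := hLfin
  choose n s hs using fun H : Subgroup G =>
    Submodule.fg_iff_exists_fin_generating_family.mp (cocyclesOn_fg L H)
  have hs_mem : ∀ i : Σ H, Fin (n H), s i.1 i.2 ∈ cocyclesOn L i.1 := fun i => by
    rw [← hs i.1]
    exact Submodule.subset_span ⟨i.2, rfl⟩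
  let φ := TwistingCocycle.sigma (X := fun i : Σ H, Fin (n H) => G ⧸ i.1) fun i =>
    cosetCocycle i.1 (hs_mem i)
  refine ⟨φ.Extension, _ →₀ ℤ, inferInstance, inferInstance, inferInstance, inferInstance,
    inferInstance, inferInstance, isCoflasqueLattice_iff.mpr fun H => ?_,
    isPermutationLattice_finsupp, φ.inl, φ.snd, φ.isEquivariantSES⟩
  refine φ.isEquivariantSES.cocyclesOn_le_coboundariesOn ?_
    (cocyclesOn_finsupp_le_coboundariesOn H)
  rw [← hs H, Submodule.span_le]
  rintro _ ⟨j, rfl⟩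
  exact φ.compLeft_inl_mem_coboundariesOn (x := ⟨⟨H, j⟩, ↑(1 : G)⟩)
    (fun g hg => congrArg (Sigma.mk _) (smul_coe_one_of_mem H hg))
    (fun g hg => cosetCocycle_apply_one H (hs_mem ⟨H, j⟩) hg)
end

section
/- Let G be a finite group of order n. Then n·1 = 0 in the ring τ_ℤ(G), and τ_ℤ(G) is a finite ring. -/
set_option synthInstance.maxHeartbeats 1000000
set_option maxHeartbeats 1000000

/-! ## The Yoshida algebra `γ_R(G)` and the Tate–Yoshida algebra `τ_R(G)` -/

section Yoshida

variable (R : Type) [CommRing R] (G : Type) [Group G]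

/-- The `G`-action on a permutation module `R[X] = (X →₀ R)` by permuting the basis. -/
noncomputable instance (X : Type) [MulAction G X] : DistribMulAction G (X →₀ R) :=
  Finsupp.comapDistribMulAction

/-- The direct sum `⊕_{H ≤ G} R[G/H]` of all the transitive permutation
`RG`-modules, with its componentwise `G`-action. -/
abbrev BigPermModule : Type := ∀ H : Subgroup G, (G ⧸ H →₀ R)

/-- The ring `End_{RG}(⊕_{H ≤ G} R[G/H])` of `RG`-module endomorphisms, i.e.
`R`-linear `G`-equivariant endomorphisms, of the direct sum of all transitive
permutation modules. -/
noncomputable def permEnd : Subring (Module.End R (BigPermModule R G)) where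
  carrier := {f | ∀ (g : G) (v : BigPermModule R G), f (g • v) = g • f v}
  zero_mem' := by intro g v; simp
  one_mem' := by intro g v; simp
  add_mem' := by
    intro a b ha hb g v
    simp [ha g v, hb g v, smul_add]
  neg_mem' := by
    intro a ha g v
    simp [ha g v]
  mul_mem' := by
    intro a b ha hb g v
    have h1 : (a * b) (g • v) = a (b (g • v)) := rfl
    rw [h1, hb g v, ha g (b v)]
    rfl

/-- The Yoshida algebra `γ_R(G) = End_{RG}(⊕_{H ≤ G} R[G/H])ᵒᵖ`. -/
abbrev YoshidaAlgebra : Type := (permEnd R G)ᵐᵒᵖ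

/-- The idempotent `e₁ ∈ γ_R(G)`: the identity on the summand `R[G/1] = RG` and
zero on all other summands. -/
noncomputable def yoshidaE1 : YoshidaAlgebra R G :=
  haveI : DecidableEq (Subgroup G) := Classical.decEq _
  MulOpposite.op
    ⟨(LinearMap.single R (fun H : Subgroup G => (G ⧸ H →₀ R)) ⊥).comp (LinearMap.proj ⊥),
      by
        intro g v
        funext H
        by_cases h : H = (⊥ : Subgroup G)
        · subst h
          simp [LinearMap.coe_single, Pi.single_apply, Pi.smul_apply]
        · simp [LinearMap.coe_single, Pi.single_apply, h, Pi.smul_apply]⟩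

/-- The Tate–Yoshida algebra `τ_R(G) = γ_R(G)/⟨e₁⟩`, the quotient of the Yoshida
algebra by the two-sided ideal generated by the idempotent `e₁`. -/
abbrev TateYoshidaAlgebra : Type :=
  RingQuot (fun a b : YoshidaAlgebra R G => a = yoshidaE1 R G ∧ b = 0)

end Yoshida

/-! For a subgroup `H`, pulling back along the projection `π : G ⧸ ⊥ → G ⧸ H` and then pushing
forward along it multiplies `R[G/H]` by `|H|`, the size of the fibres of `π`. As
`|G| = [G:H]·|H|`, the endomorphism `|G|·id` of the summand `R[G/H]` factors through the summand
`R[G/1]`, i.e. equals `a_H e₁ b_H` in `γ_R(G)`; summing over `H` puts `|G|·1` in `⟨e₁⟩`.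
Over `ℤ`, `γ_ℤ(G)` sits inside the endomorphisms of a finitely generated free abelian group, so
`τ_ℤ(G)` is a finitely generated abelian group killed by `|G|`, hence finite. -/

section Pullback

variable (R : Type) [Semiring R] {X Y : Type}

noncomputable def Finsupp.lpullback [Finite X] (p : X → Y) : (Y →₀ R) →ₗ[R] (X →₀ R) :=
  (Finsupp.linearEquivFunOnFinite R R X).symm.toLinearMap ∘ₗ LinearMap.funLeft R R p ∘ₗ
    Finsupp.lcoeFun

variable {R}

@[simp]
lemma Finsupp.lpullback_apply [Finite X] (p : X → Y) (f : Y →₀ R) (x : X) :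
    Finsupp.lpullback R p f x = f (p x) := rfl

lemma Finsupp.lmapDomain_comp_lpullback [Finite X] {p : X → Y} {c : ℕ}
    (hc : ∀ y, Nat.card {x // p x = y} = c) :
    Finsupp.lmapDomain R R p ∘ₗ Finsupp.lpullback R p = c • LinearMap.id := by
  classical
  have := Fintype.ofFinite X
  refine LinearMap.ext fun f => Finsupp.ext fun y => ?_
  rw [LinearMap.comp_apply, Finsupp.lmapDomain_apply, Finsupp.mapDomain,
    Finsupp.sum_fintype _ _ (fun _ => Finsupp.single_zero _), Finsupp.finsetSum_apply]
  simp only [Finsupp.single_apply, Finsupp.lpullback_apply]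
  rw [← Finset.sum_filter, Finset.sum_congr rfl (fun x hx => by rw [(Finset.mem_filter.1 hx).2]),
    Finset.sum_const, ← Fintype.card_subtype, ← Nat.card_eq_fintype_card, hc]
  rfl

end Pullback

section Equivariance

variable {R : Type} [CommRing R] {G X Y : Type} [Group G] [MulAction G X] [MulAction G Y]
  {p : X → Y}

lemma Finsupp.lpullback_smul [Finite X] (hp : ∀ (g : G) x, p (g • x) = g • p x)
    (g : G) (f : Y →₀ R) : Finsupp.lpullback R p (g • f) = g • Finsupp.lpullback R p f := by
  ext x
  simp [Finsupp.comapSMul_apply, hp]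

lemma Finsupp.mapDomain_smul_of_equivariant (hp : ∀ (g : G) x, p (g • x) = g • p x)
    (g : G) (f : X →₀ R) : Finsupp.mapDomain p (g • f) = g • Finsupp.mapDomain p f := by
  change Finsupp.mapDomain p (Finsupp.mapDomain (g • ·) f) = Finsupp.mapDomain (g • ·) _
  rw [← Finsupp.mapDomain_comp, ← Finsupp.mapDomain_comp]
  exact congrArg (Finsupp.mapDomain · f) (funext (hp g))

end Equivariance

section QuotientMap

variable {G : Type} [Group G]

lemma Subgroup.quotientMapOfLE_smul {s t : Subgroup G} (h : s ≤ t) (g : G) (q : G ⧸ s) :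
    Subgroup.quotientMapOfLE h (g • q) = g • Subgroup.quotientMapOfLE h q := by
  induction q using QuotientGroup.induction_on with | H x => rfl

lemma Subgroup.card_quotientMapOfLE_bot_fiber (H : Subgroup G) (p : G ⧸ H) :
    Nat.card {q : G ⧸ (⊥ : Subgroup G) // Subgroup.quotientMapOfLE bot_le q = p} = Nat.card H := by
  have e : {q : G ⧸ (⊥ : Subgroup G) // Subgroup.quotientMapOfLE bot_le q = p} ≃
      (QuotientGroup.mk ⁻¹' {p} : Set G) :=
    QuotientGroup.quotientBot.toEquiv.subtypeEquiv fun q => by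
      induction q using QuotientGroup.induction_on with | H x => rfl
  rw [Nat.card_congr e, QuotientGroup.card_preimage_mk,
    Nat.card_unique (α := ({p} : Set (G ⧸ H))), mul_one]

lemma lmapDomain_comp_lpullback_quotientMapOfLE_bot (R : Type) [Semiring R] [Finite G]
    (H : Subgroup G) :
    (H.index • Finsupp.lmapDomain R R (Subgroup.quotientMapOfLE bot_le)) ∘ₗ
      Finsupp.lpullback R (Subgroup.quotientMapOfLE (bot_le : ⊥ ≤ H)) =
      Nat.card G • LinearMap.id := by
  rw [LinearMap.smul_comp,
    Finsupp.lmapDomain_comp_lpullback (Subgroup.card_quotientMapOfLE_bot_fiber H), smul_smul,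
    H.index_mul_card]

end QuotientMap

section BlockEnd

variable (R : Type) [Semiring R] {ι : Type} [DecidableEq ι] (M : ι → Type)
  [∀ i, AddCommMonoid (M i)] [∀ i, Module R (M i)]

def blockEnd {i j : ι} (φ : M i →ₗ[R] M j) : Module.End R (∀ k, M k) :=
  LinearMap.single R M j ∘ₗ φ ∘ₗ LinearMap.proj i

variable {R M}

lemma blockEnd_apply {i j : ι} (φ : M i →ₗ[R] M j) (v : ∀ k, M k) :
    blockEnd R M φ v = Pi.single j (φ (v i)) := rfl

lemma blockEnd_mul_blockEnd {i j k : ι} (ψ : M j →ₗ[R] M k) (φ : M i →ₗ[R] M j) :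
    blockEnd R M ψ * blockEnd R M φ = blockEnd R M (ψ ∘ₗ φ) := by
  ext v
  simp [blockEnd_apply]

lemma blockEnd_nsmul {i j : ι} (n : ℕ) (φ : M i →ₗ[R] M j) :
    blockEnd R M (n • φ) = n • blockEnd R M φ := by
  simp only [blockEnd, LinearMap.smul_comp, LinearMap.comp_smul]

lemma sum_blockEnd_id [Fintype ι] : ∑ i, blockEnd R M (LinearMap.id : M i →ₗ[R] M i) = 1 := by
  ext v
  simp [blockEnd_apply]

end BlockEnd

section Yoshida

variable (R : Type) [CommRing R] (G : Type) [Group G]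

lemma blockEnd_mem_permEnd [DecidableEq (Subgroup G)] {H K : Subgroup G}
    {φ : (G ⧸ H →₀ R) →ₗ[R] (G ⧸ K →₀ R)} (hφ : ∀ (g : G) v, φ (g • v) = g • φ v) :
    blockEnd R _ φ ∈ permEnd R G := by
  intro g v
  funext L
  by_cases hL : L = K
  · subst hL
    simp [blockEnd_apply, hφ]
  · simp [blockEnd_apply, hL]

open Classical in
lemma coe_unop_yoshidaE1 :
    ((yoshidaE1 R G).unop : Module.End R (BigPermModule R G)) =
      blockEnd R _ (LinearMap.id : (G ⧸ (⊥ : Subgroup G) →₀ R) →ₗ[R] _) :=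
  rfl

open Classical in
theorem natCast_card_mem_span_yoshidaE1 [Finite G] :
    (Nat.card G : YoshidaAlgebra R G) ∈ TwoSidedIdeal.span {yoshidaE1 R G} := by
  have := Fintype.ofFinite (Subgroup G)
  let π : ∀ H : Subgroup G, G ⧸ (⊥ : Subgroup G) → G ⧸ H := fun H =>
    Subgroup.quotientMapOfLE bot_le
  have hπ (H : Subgroup G) : ∀ g q, π H (g • q) = g • π H q :=
    Subgroup.quotientMapOfLE_smul bot_le
  let down (H : Subgroup G) : permEnd R G :=
    ⟨blockEnd R _ (Finsupp.lpullback R (π H)),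
      blockEnd_mem_permEnd R G (Finsupp.lpullback_smul (hπ H))⟩
  let up (H : Subgroup G) : permEnd R G :=
    ⟨blockEnd R _ (H.index • Finsupp.lmapDomain R R (π H)),
      blockEnd_mem_permEnd R G fun g v => by
        rw [LinearMap.smul_apply, LinearMap.smul_apply, Finsupp.lmapDomain_apply,
          Finsupp.lmapDomain_apply, Finsupp.mapDomain_smul_of_equivariant (hπ H), smul_comm]⟩
  have hsum : (Nat.card G : permEnd R G) = ∑ H, up H * (yoshidaE1 R G).unop * down H := by
    apply Subtype.ext
    push_cast
    simp only [coe_unop_yoshidaE1, up, down, π, blockEnd_mul_blockEnd, LinearMap.comp_id]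
    simp only [lmapDomain_comp_lpullback_quotientMapOfLE_bot, blockEnd_nsmul]
    rw [← Finset.smul_sum, sum_blockEnd_id, nsmul_one]
  rw [← MulOpposite.op_natCast, hsum, Finset.op_sum]
  refine sum_mem fun H _ => ?_
  rw [MulOpposite.op_mul, MulOpposite.op_mul, MulOpposite.op_unop]
  exact TwoSidedIdeal.mul_mem_left _ _ _
    (TwoSidedIdeal.mul_mem_right _ _ _ (TwoSidedIdeal.subset_span rfl))

end Yoshida

lemma tateYoshidaAlgebra_natCast_card_eq_zero (R : Type) [CommRing R] (G : Type) [Group G]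
    [Finite G] : (Nat.card G : TateYoshidaAlgebra R G) = 0 := by
  let π : YoshidaAlgebra R G →+* TateYoshidaAlgebra R G := RingQuot.mkRingHom _
  have hker : TwoSidedIdeal.span {yoshidaE1 R G} ≤ TwoSidedIdeal.ker π :=
    TwoSidedIdeal.span_le.2 <| Set.singleton_subset_iff.2 <| (TwoSidedIdeal.mem_ker _).2 <|
      (RingQuot.mkRingHom_rel ⟨rfl, rfl⟩).trans (map_zero _)
  rw [← map_natCast π]
  exact (TwoSidedIdeal.mem_ker _).1 (hker (natCast_card_mem_span_yoshidaE1 R G))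

lemma finite_of_natCast_eq_zero {A : Type} [Ring A] [AddGroup.FG A] {n : ℕ} (hn : n ≠ 0)
    (h : (n : A) = 0) : Finite A := by
  refine AddCommGroup.finite_of_fg_isAddTorsion A fun a =>
    isOfFinAddOrder_iff_nsmul_eq_zero.2 ⟨n, Nat.pos_of_ne_zero hn, ?_⟩
  rw [nsmul_eq_mul, h, zero_mul]

instance addGroupFG_permEnd (G : Type) [Group G] [Finite G] : AddGroup.FG (permEnd ℤ G) := by
  have : Module.Finite ℤ (permEnd ℤ G) :=
    Module.Finite.of_injective (permEnd ℤ G).subtype.toAddMonoidHom.toIntLinearMap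
      Subtype.val_injective
  exact Module.Finite.iff_addGroup_fg.1 this

instance addGroupFG_tateYoshidaAlgebra (G : Type) [Group G] [Finite G] :
    AddGroup.FG (TateYoshidaAlgebra ℤ G) :=
  AddGroup.fg_of_surjective (f := (RingQuot.mkRingHom _).toAddMonoidHom.comp
    (MulOpposite.opAddEquiv : permEnd ℤ G ≃+ YoshidaAlgebra ℤ G).toAddMonoidHom)
    ((RingQuot.mkRingHom_surjective _).comp MulOpposite.opAddEquiv.surjective)

/-- **The Tate–Yoshida algebra is a finite ring killed by `|G|`.**
For a finite group `G` of order `n`, one has `n · 1 = 0` in `τ_ℤ(G)`, and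
`τ_ℤ(G)` is a finite ring. -/
theorem tateYoshida_card_eq_zero_and_finite
    (G : Type) [Group G] [Finite G] :
    ((Nat.card G : ℕ) : TateYoshidaAlgebra ℤ G) = 0 ∧
      Finite (TateYoshidaAlgebra ℤ G) := by
  have hcard := tateYoshidaAlgebra_natCast_card_eq_zero ℤ G
  exact ⟨hcard, finite_of_natCast_eq_zero Nat.card_pos.ne' hcard⟩
end
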